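/- Let m > 0 and λ > 0, and let f : ℝ^d → ℝ be continuous and m-strongly convex. Define g : ℝ^d → ℝ by g(x) := inf_{y ∈ ℝ^d} [ f(y) + (λ/2)‖y − x‖² ]. Then g is (λm/(λ + m))-strongly convex, i.e., for all x₁, x₂ ∈ ℝ^d and all θ ∈ (0, 1), g(θx₁ + (1 − θ)x₂) ≤ θ·g(x₁) + (1 − θ)·g(x₂) − (λm/(2(λ + m)))·θ(1 − θ)·‖x₁ − x₂‖². -/

import Mathlib

/-!
Write `M` for the envelope, `F y x = f y + (λ/2)‖y - x‖²`, and `xθ = a • x₁ + b • x₂`,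
`yθ = a • y₁ + b • y₂`. Testing `M xθ` at `yθ`, the `m`-strong convexity of `f` and the
`λ`-strong convexity of `(λ/2)‖·‖²` at `yᵢ - xᵢ` give
`M xθ ≤ a F y₁ x₁ + b F y₂ x₂ - a b ((m/2)‖y₁ - y₂‖² + (λ/2)‖(y₁ - x₁) - (y₂ - x₂)‖²)`.
The two vectors in the penalty differ by `x₁ - x₂`, so by `(m s - λ t)² ≥ 0` the penalty is at
least `λm/(2(λ+m)) ‖x₁ - x₂‖²`, uniformly in `y₁, y₂`; taking infima over `y₁` and `y₂` gives the
claim. The infima are finite because a strongly convex function on a finite-dimensional space is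
continuous, so its convex part is bounded below by `a - b‖z‖` and `f` itself by a constant.
-/

open Set

lemma le_mul_iInf_add_mul_iInf {ι κ : Sort*} [Nonempty ι] [Nonempty κ] {F : ι → ℝ} {G : κ → ℝ}
    {a b c : ℝ} (ha : 0 ≤ a) (hb : 0 ≤ b) (h : ∀ i j, c ≤ a * F i + b * G j) :
    c ≤ a * (⨅ i, F i) + b * ⨅ j, G j := by
  have hG : ∀ i, c - a * F i ≤ b * ⨅ j, G j := fun i => by
    rw [Real.mul_iInf_of_nonneg hb]
    exact le_ciInf fun j => by linarith [h i j]
  rw [← sub_le_iff_le_add, Real.mul_iInf_of_nonneg ha]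
  exact le_ciInf fun i => by linarith [hG i]

section NormedSpace

variable {E : Type*} [NormedAddCommGroup E] [NormedSpace ℝ E]

lemma ConvexOn.exists_sub_mul_norm_le {h : E → ℝ} (hconv : ConvexOn ℝ univ h)
    (hc : ContinuousAt h 0) : ∃ a b : ℝ, ∀ z, a - b * ‖z‖ ≤ h z := by
  obtain ⟨r, hr, hball⟩ := Metric.continuousAt_iff.1 hc 1 one_pos
  have hnear : ∀ w : E, ‖w‖ < r → h 0 - 1 ≤ h w := fun w hw => by
    have := hball (by simpa using hw)
    rw [Real.dist_eq] at this
    linarith [abs_lt.1 this]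
  refine ⟨h 0 - 1, 2 / r, fun z => ?_⟩
  rcases lt_or_ge ‖z‖ (r / 2) with hz | hz
  · have : 0 ≤ 2 / r * ‖z‖ := by positivity
    linarith [hnear z (by linarith)]
  · set t := r / (2 * ‖z‖)
    have hz₀ : 0 < ‖z‖ := by linarith
    have ht₀ : 0 < t := by positivity
    have ht₁ : t ≤ 1 := by rw [div_le_one (by positivity)]; linarith
    have htz : t * ‖z‖ = r / 2 := by simp only [t]; field_simp
    have hnear_tz := hnear (t • z) (by rw [norm_smul, Real.norm_of_nonneg ht₀.le, htz]; linarith)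
    have hseg := hconv.2 (mem_univ 0) (mem_univ z) (sub_nonneg.2 ht₁) ht₀.le (sub_add_cancel 1 t)
    simp only [smul_zero, zero_add, smul_eq_mul] at hseg
    have ht_inv : t * (2 / r * ‖z‖) = 1 := by rw [mul_left_comm, htz]; field_simp
    refine le_of_mul_le_mul_left ?_ ht₀
    nlinarith

end NormedSpace

section MoreauEnvelope

variable {E : Type*} [NormedAddCommGroup E] {f : E → ℝ} {m lam : ℝ}

lemma mul_div_add_mul_norm_sub_sq_le (hm : 0 < m) (hlam : 0 < lam) (v w : E) :
    lam * m / (lam + m) * ‖v - w‖ ^ 2 ≤ m * ‖v‖ ^ 2 + lam * ‖w‖ ^ 2 := by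
  have hvw : ‖v - w‖ ^ 2 ≤ (‖v‖ + ‖w‖) ^ 2 := by
    gcongr
    exact norm_sub_le v w
  rw [div_mul_eq_mul_div, div_le_iff₀ (by positivity)]
  nlinarith [sq_nonneg (m * ‖v‖ - lam * ‖w‖),
    mul_le_mul_of_nonneg_left hvw (by positivity : 0 ≤ lam * m)]

noncomputable def moreauEnvelope (lam : ℝ) (f : E → ℝ) (x : E) : ℝ :=
  ⨅ z, f z + lam / 2 * ‖z - x‖ ^ 2

lemma moreauEnvelope_le (hlam : 0 ≤ lam) (hbdd : BddBelow (range f)) (x z : E) :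
    moreauEnvelope lam f x ≤ f z + lam / 2 * ‖z - x‖ ^ 2 := by
  obtain ⟨c, hc⟩ := hbdd
  refine ciInf_le ⟨c, ?_⟩ z
  rintro _ ⟨y, rfl⟩
  have : 0 ≤ lam / 2 * ‖y - x‖ ^ 2 := by positivity
  linarith [hc ⟨y, rfl⟩]

end MoreauEnvelope

section InnerProductSpace

variable {E : Type*} [NormedAddCommGroup E] [InnerProductSpace ℝ E] {f : E → ℝ} {m lam : ℝ}

lemma StrongConvexOn.bddBelow_range [FiniteDimensional ℝ E] (hm : 0 < m)
    (hf : StrongConvexOn univ m f) : BddBelow (range f) := by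
  have hconv := strongConvexOn_iff_convex.1 hf
  obtain ⟨a, b, hab⟩ := hconv.exists_sub_mul_norm_le
    ((hconv.continuousOn isOpen_univ).continuousAt Filter.univ_mem)
  refine ⟨a - b ^ 2 / (2 * m), ?_⟩
  rintro _ ⟨z, rfl⟩
  have hsq : b ^ 2 / (2 * m) + (m / 2 * ‖z‖ ^ 2 - b * ‖z‖) = (m * ‖z‖ - b) ^ 2 / (2 * m) := by
    field_simp
    ring
  have : 0 ≤ (m * ‖z‖ - b) ^ 2 / (2 * m) := by positivity
  linarith [hab z]

lemma strongConvexOn_mul_norm_sq : StrongConvexOn univ lam fun u : E => lam / 2 * ‖u‖ ^ 2 :=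
  strongConvexOn_iff_convex.2 (by simpa using convexOn_const (0 : ℝ) convex_univ)

theorem StrongConvexOn.moreauEnvelope (hm : 0 < m) (hlam : 0 < lam)
    (hf : StrongConvexOn univ m f) (hbdd : BddBelow (range f)) :
    StrongConvexOn univ (lam * m / (lam + m)) (moreauEnvelope lam f) := by
  refine ⟨convex_univ, fun x₁ _ x₂ _ a b ha hb hab => ?_⟩
  suffices key : ∀ y₁ y₂ : E,
      _root_.moreauEnvelope lam f (a • x₁ + b • x₂)
          + a * b * (lam * m / (lam + m) / 2 * ‖x₁ - x₂‖ ^ 2)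
        ≤ a * (f y₁ + lam / 2 * ‖y₁ - x₁‖ ^ 2) + b * (f y₂ + lam / 2 * ‖y₂ - x₂‖ ^ 2) by
    have := le_mul_iInf_add_mul_iInf ha hb key
    simp only [smul_eq_mul, _root_.moreauEnvelope] at this ⊢
    linarith
  intro y₁ y₂
  have h_test := moreauEnvelope_le hlam.le hbdd (a • x₁ + b • x₂) (a • y₁ + b • y₂)
  have h_f := hf.2 (mem_univ y₁) (mem_univ y₂) ha hb hab
  have h_sq := (strongConvexOn_mul_norm_sq (lam := lam)).2
    (mem_univ (y₁ - x₁)) (mem_univ (y₂ - x₂)) ha hb hab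
  have h_gap := mul_div_add_mul_norm_sub_sq_le hm hlam (y₁ - y₂) ((y₁ - x₁) - (y₂ - x₂))
  rw [show a • y₁ + b • y₂ - (a • x₁ + b • x₂) = a • (y₁ - x₁) + b • (y₂ - x₂) by module]
    at h_test
  rw [show y₁ - y₂ - (y₁ - x₁ - (y₂ - x₂)) = x₁ - x₂ by abel] at h_gap
  simp only [smul_eq_mul] at h_f h_sq
  nlinarith [mul_le_mul_of_nonneg_left h_gap (mul_nonneg ha hb)]

end InnerProductSpace

theorem stmt7 (d : ℕ) (m lam : ℝ) (hm : 0 < m) (hlam : 0 < lam)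
    (f : EuclideanSpace ℝ (Fin d) → ℝ)
    (hconv : ConvexOn ℝ Set.univ (fun x => f x - m / 2 * ‖x‖ ^ 2))
    (g : EuclideanSpace ℝ (Fin d) → ℝ)
    (hg : ∀ x, g x = ⨅ z : EuclideanSpace ℝ (Fin d), (f z + lam / 2 * ‖z - x‖ ^ 2)) :
    ∀ x₁ x₂ : EuclideanSpace ℝ (Fin d), ∀ θ : ℝ, 0 < θ → θ < 1 →
      g (θ • x₁ + (1 - θ) • x₂)
        ≤ θ * g x₁ + (1 - θ) * g x₂
          - lam * m / (2 * (lam + m)) * (θ * (1 - θ)) * ‖x₁ - x₂‖ ^ 2 := by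
  intro x₁ x₂ θ hθ₀ hθ₁
  have hf : StrongConvexOn univ m f := strongConvexOn_iff_convex.2 hconv
  obtain rfl : g = moreauEnvelope lam f := funext hg
  have := (hf.moreauEnvelope hm hlam (hf.bddBelow_range hm)).2 (mem_univ x₁) (mem_univ x₂)
    hθ₀.le (sub_nonneg.2 hθ₁.le) (add_sub_cancel θ 1)
  simp only [smul_eq_mul] at this
  rw [mul_comm 2, ← div_div]
  linarith
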